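/- Let ν < 0, ρ > 0, and let A₀ ∈ ℝ^{n×n}, C ∈ ℝ^{k×n}, G ∈ ℝ^{n×n} satisfy A₀·G = (G + ν·I)·A₀ and C·G = C, with G anti-Hurwitz. Let P ∈ ℝ^{n×n} be symmetric positive definite and L ∈ ℝ^{n×k} be such that P·(A₀+L·C) + (A₀+L·C)ᵀ·P + ρ·(P·G + Gᵀ·P) ⪯ 0 and P·G + Gᵀ·P ≻ 0. Let ξ₀ > 0, T₀ = ξ₀^{−ν}/(−ν·ρ) and ξ(t) = (ξ₀^{−ν} + ν·ρ·t)^{−1/ν} for t ∈ [0,T₀). Then every differentiable function ε : [0,T₀) → ℝⁿ satisfying ε'(t) = A₀·ε(t) + ξ(t)^{ν−1}·exp(ln ξ(t)·G)·L·C·ε(t) for all t ∈ [0,T₀) converges to zero at the prescribed time T₀: ε(t) → 0 as t → T₀ from the left. -/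

import Mathlib

open Matrix NormedSpace Filter

section Helpers
variable {n k : ℕ}

noncomputable def entryCLM (i j : Fin n) : Matrix (Fin n) (Fin n) ℝ →L[ℝ] ℝ := by
  letI : SeminormedRing (Matrix (Fin n) (Fin n) ℝ) := Matrix.linftyOpSemiNormedRing
  letI : NormedRing (Matrix (Fin n) (Fin n) ℝ) := Matrix.linftyOpNormedRing
  letI : NormedAlgebra ℝ (Matrix (Fin n) (Fin n) ℝ) := Matrix.linftyOpNormedAlgebra
  exact LinearMap.toContinuousLinearMap
    { toFun := fun M => M i j, map_add' := fun _ _ => rfl, map_smul' := fun _ _ => rfl }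

lemma hasDerivAt_exp_entry' (G : Matrix (Fin n) (Fin n) ℝ) (u : ℝ) (i j : Fin n) :
    HasDerivAt (fun u : ℝ => exp (u • G) i j) ((G * exp (u • G)) i j) u := by
  letI : SeminormedRing (Matrix (Fin n) (Fin n) ℝ) := Matrix.linftyOpSemiNormedRing
  letI : NormedRing (Matrix (Fin n) (Fin n) ℝ) := Matrix.linftyOpNormedRing
  letI : NormedAlgebra ℝ (Matrix (Fin n) (Fin n) ℝ) := Matrix.linftyOpNormedAlgebra
  have h := hasDerivAt_exp_smul_const' (𝕂 := ℝ) G u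
  exact ((entryCLM i j).hasFDerivAt.comp_hasDerivAt u h)

noncomputable def mulLeftCLM (A : Matrix (Fin k) (Fin n) ℝ) :
    Matrix (Fin n) (Fin n) ℝ →L[ℝ] Matrix (Fin k) (Fin n) ℝ := by
  letI : SeminormedRing (Matrix (Fin n) (Fin n) ℝ) := Matrix.linftyOpSemiNormedRing
  letI : NormedRing (Matrix (Fin n) (Fin n) ℝ) := Matrix.linftyOpNormedRing
  letI : NormedAlgebra ℝ (Matrix (Fin n) (Fin n) ℝ) := Matrix.linftyOpNormedAlgebra
  letI : NormedAddCommGroup (Matrix (Fin k) (Fin n) ℝ) := Matrix.linftyOpNormedAddCommGroup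
  letI : NormedSpace ℝ (Matrix (Fin k) (Fin n) ℝ) := Matrix.linftyOpNormedSpace
  exact LinearMap.toContinuousLinearMap
    { toFun := fun M => A * M, map_add' := fun _ _ => Matrix.mul_add _ _ _,
      map_smul' := fun _ _ => (Matrix.mul_smul _ _ _) }

lemma mul_exp_of_commutes (X A Y : Matrix (Fin n) (Fin n) ℝ) (h : X * A = A * Y) :
    exp X * A = A * exp Y := by
  letI : SeminormedRing (Matrix (Fin n) (Fin n) ℝ) := Matrix.linftyOpSemiNormedRing
  letI : NormedRing (Matrix (Fin n) (Fin n) ℝ) := Matrix.linftyOpNormedRing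
  letI : NormedAlgebra ℝ (Matrix (Fin n) (Fin n) ℝ) := Matrix.linftyOpNormedAlgebra
  have hpow : ∀ m : ℕ, X ^ m * A = A * Y ^ m := by
    intro m
    induction m with
    | zero => simp
    | succ m ih => rw [pow_succ, pow_succ, mul_assoc, h, ← mul_assoc, ih, mul_assoc]
  simp only [exp_eq_tsum ℝ]
  have hs : Summable (fun m : ℕ => (m.factorial : ℝ)⁻¹ • X ^ m) :=
    expSeries_summable' (𝕂 := ℝ) X
  have hs2 : Summable (fun m : ℕ => (m.factorial : ℝ)⁻¹ • Y ^ m) :=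
    expSeries_summable' (𝕂 := ℝ) Y
  calc (∑' m : ℕ, (m.factorial : ℝ)⁻¹ • X ^ m) * A
      = ∑' m : ℕ, ((m.factorial : ℝ)⁻¹ • X ^ m) * A := by
        exact (hs.tsum_mul_right A).symm
    _ = ∑' m : ℕ, A * ((m.factorial : ℝ)⁻¹ • Y ^ m) := by
        congr 1; funext m
        rw [smul_mul_assoc, mul_smul_comm, hpow m]
    _ = A * ∑' m : ℕ, (m.factorial : ℝ)⁻¹ • Y ^ m := (hs2.tsum_mul_left A)

lemma C_mul_exp (C : Matrix (Fin k) (Fin n) ℝ) (G : Matrix (Fin n) (Fin n) ℝ)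
    (hC : C * G = C) (u : ℝ) :
    C * exp (u • G) = Real.exp u • C := by
  letI : SeminormedRing (Matrix (Fin n) (Fin n) ℝ) := Matrix.linftyOpSemiNormedRing
  letI : NormedRing (Matrix (Fin n) (Fin n) ℝ) := Matrix.linftyOpNormedRing
  letI : NormedAlgebra ℝ (Matrix (Fin n) (Fin n) ℝ) := Matrix.linftyOpNormedAlgebra
  letI : NormedAddCommGroup (Matrix (Fin k) (Fin n) ℝ) := Matrix.linftyOpNormedAddCommGroup
  letI : NormedSpace ℝ (Matrix (Fin k) (Fin n) ℝ) := Matrix.linftyOpNormedSpace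
  have hpow : ∀ m : ℕ, C * (u • G) ^ m = (u ^ m) • C := by
    intro m
    induction m with
    | zero => simp
    | succ m ih =>
      rw [pow_succ, ← Matrix.mul_assoc, ih, Matrix.smul_mul, Matrix.mul_smul, hC, smul_smul,
        pow_succ]
  have hs : Summable (fun m : ℕ => (m.factorial : ℝ)⁻¹ • (u • G) ^ m) :=
    expSeries_summable' (𝕂 := ℝ) (u • G)
  have hmap := (mulLeftCLM (n := n) (k := k) C).map_tsum hs
  simp only [exp_eq_tsum ℝ]
  have hCLM : ∀ M, mulLeftCLM (n := n) (k := k) C M = C * M := fun _ => rfl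
  calc C * (∑' m : ℕ, (m.factorial : ℝ)⁻¹ • (u • G) ^ m)
      = ∑' m : ℕ, C * ((m.factorial : ℝ)⁻¹ • (u • G) ^ m) := by
        rw [← hCLM, hmap]; congr 1
    _ = ∑' m : ℕ, ((m.factorial : ℝ)⁻¹ * u ^ m) • C := by
        congr 1; funext m
        rw [Matrix.mul_smul, hpow m, smul_smul]
    _ = (∑' m : ℕ, (m.factorial : ℝ)⁻¹ * u ^ m) • C := by
        have hsum : Summable (fun m : ℕ => (m.factorial : ℝ)⁻¹ * u ^ m) :=
          (Real.summable_pow_div_factorial u).congr (by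
            intro m; rw [div_eq_inv_mul])
        rw [hsum.tsum_smul_const]
    _ = Real.exp u • C := by
      congr 1
      rw [Real.exp_eq_exp_ℝ]
      simp [exp_eq_tsum ℝ, smul_eq_mul]

lemma exp_smul_one (c : ℝ) :
    exp (c • (1 : Matrix (Fin n) (Fin n) ℝ)) = Real.exp c • (1 : Matrix (Fin n) (Fin n) ℝ) := by
  rw [Matrix.smul_one_eq_diagonal, Matrix.exp_diagonal, Matrix.smul_one_eq_diagonal]
  funext i
  simp [Pi.exp_def, Real.exp_eq_exp_ℝ]

lemma exp_neg_mul (G : Matrix (Fin n) (Fin n) ℝ) (u : ℝ) :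
    exp ((-u) • G) * exp (u • G) = 1 := by
  rw [← Matrix.exp_add_of_commute _ _ (by
    exact (Commute.refl G).smul_left (-u) |>.smul_right u)]
  simp [← add_smul]

lemma exp_smul_mul_A₀ {ν : ℝ} (A₀ G : Matrix (Fin n) (Fin n) ℝ)
    (hA₀ : A₀ * G = (G + ν • (1 : Matrix (Fin n) (Fin n) ℝ)) * A₀) (u : ℝ) :
    exp (u • G) * A₀ = Real.exp (-(ν * u)) • (A₀ * exp (u • G)) := by
  have hGA : G * A₀ = A₀ * G - ν • A₀ := by
    have h2 := hA₀
    rw [Matrix.add_mul, Matrix.smul_mul, Matrix.one_mul] at h2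
    rw [h2]; abel
  have h : (u • G) * A₀ = A₀ * (u • G + (-(ν * u)) • (1 : Matrix (Fin n) (Fin n) ℝ)) := by
    rw [Matrix.smul_mul, hGA, Matrix.mul_add, Matrix.mul_smul, Matrix.mul_smul, Matrix.mul_one]
    rw [smul_sub, smul_smul]
    module
  rw [mul_exp_of_commutes _ _ _ h,
    Matrix.exp_add_of_commute _ _
      (((Commute.one_right (u • G)).smul_right (-(ν * u)))),
    exp_smul_one, Matrix.mul_smul, Matrix.mul_one]
  rw [Matrix.mul_smul]

lemma hasDerivAt_dotProduct {u v : ℝ → (Fin n → ℝ)} {u' v' : Fin n → ℝ} {t : ℝ}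
    (hu : HasDerivAt u u' t) (hv : HasDerivAt v v' t) :
    HasDerivAt (fun t => u t ⬝ᵥ v t) (u' ⬝ᵥ v t + u t ⬝ᵥ v') t := by
  simp only [dotProduct]
  have : ∀ i ∈ Finset.univ, HasDerivAt (fun t => u t i * v t i)
      (u' i * v t i + u t i * v' i) t := fun i _ =>
    ((hasDerivAt_pi.1 hu i).mul (hasDerivAt_pi.1 hv i))
  have hsum := HasDerivAt.fun_sum this
  simpa [Finset.sum_add_distrib] using hsum

lemma hasDerivAt_matfun_mulVec {M : ℝ → Matrix (Fin n) (Fin n) ℝ}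
    {M' : Matrix (Fin n) (Fin n) ℝ} {v : ℝ → (Fin n → ℝ)} {vd : Fin n → ℝ} {t : ℝ}
    (hM : ∀ i j, HasDerivAt (fun t => M t i j) (M' i j) t) (hv : HasDerivAt v vd t) :
    HasDerivAt (fun t => (M t).mulVec (v t)) (M'.mulVec (v t) + (M t).mulVec vd) t := by
  rw [hasDerivAt_pi]
  intro i
  simp only [Matrix.mulVec, dotProduct, Pi.add_apply]
  have : ∀ j ∈ Finset.univ, HasDerivAt (fun t => M t i j * v t j)
      (M' i j * v t j + M t i j * vd j) t := fun j _ =>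
    ((hM i j).mul (hasDerivAt_pi.1 hv j))
  have hsum := HasDerivAt.fun_sum this
  simpa [Finset.sum_add_distrib] using hsum

lemma continuous_quadForm (M : Matrix (Fin n) (Fin n) ℝ) :
    Continuous fun x : Fin n → ℝ => x ⬝ᵥ M.mulVec x := by
  simp only [dotProduct, Matrix.mulVec]
  exact continuous_finset_sum _ fun i _ =>
    (continuous_apply i).mul (continuous_finset_sum _ fun j _ =>
      (continuous_const.mul (continuous_apply j)))

lemma quadForm_smul (M : Matrix (Fin n) (Fin n) ℝ) (c : ℝ) (x : Fin n → ℝ) :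
    (c • x) ⬝ᵥ M.mulVec (c • x) = c ^ 2 * (x ⬝ᵥ M.mulVec x) := by
  rw [Matrix.mulVec_smul, smul_dotProduct, dotProduct_smul]
  simp [smul_eq_mul]; ring

lemma dot_mulVec_swap (A : Matrix (Fin n) (Fin n) ℝ) (x y : Fin n → ℝ) :
    (A.mulVec x) ⬝ᵥ y = x ⬝ᵥ (Aᵀ.mulVec y) := by
  rw [Matrix.dotProduct_mulVec, Matrix.vecMul_transpose, dotProduct_comm]

end Helpers

open Matrix
/-- A real square matrix is anti-Hurwitz if every eigenvalue of it (over `ℂ`)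
has strictly positive real part. -/
def AntiHurwitz {n : ℕ} (M : Matrix (Fin n) (Fin n) ℝ) : Prop :=
  ∀ μ : ℂ, μ ∈ spectrum ℂ (M.map (fun a => (a : ℂ))) → 0 < μ.re

set_option maxHeartbeats 2000000 in
/-- prescribed-time convergence of the estimation error of the dynamic
homogeneous observer: `ε(t) → 0` as `t → T₀⁻`. -/
theorem stmt_11 {n k : ℕ} (ν ρ : ℝ) (hν : ν < 0) (hρ : 0 < ρ)
    (A₀ : Matrix (Fin n) (Fin n) ℝ) (C : Matrix (Fin k) (Fin n) ℝ)
    (G : Matrix (Fin n) (Fin n) ℝ)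
    (hA₀ : A₀ * G = (G + ν • (1 : Matrix (Fin n) (Fin n) ℝ)) * A₀)
    (hC : C * G = C)
    (hG : AntiHurwitz G)
    (P : Matrix (Fin n) (Fin n) ℝ) (L : Matrix (Fin n) (Fin k) ℝ)
    (hPsym : P.IsSymm)
    (hPpd : ∀ x : Fin n → ℝ, x ≠ 0 → 0 < x ⬝ᵥ P.mulVec x)
    (hLMI : ∀ x : Fin n → ℝ,
      x ⬝ᵥ (P * (A₀ + L * C) + (A₀ + L * C)ᵀ * P + ρ • (P * G + Gᵀ * P)).mulVec x ≤ 0)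
    (hGpd : ∀ x : Fin n → ℝ, x ≠ 0 → 0 < x ⬝ᵥ (P * G + Gᵀ * P).mulVec x)
    (ξ₀ : ℝ) (hξ₀ : 0 < ξ₀) :
    let T₀ : ℝ := ξ₀ ^ (-ν) / (-ν * ρ)
    let ξ : ℝ → ℝ := fun t => (ξ₀ ^ (-ν) + ν * ρ * t) ^ (-(1 / ν))
    ∀ ε : ℝ → (Fin n → ℝ),
      (∀ t ∈ Set.Ico (0 : ℝ) T₀, HasDerivAt ε
        (A₀.mulVec (ε t) +
          (ξ t) ^ (ν - 1) •
            (NormedSpace.exp (Real.log (ξ t) • G)).mulVec (L.mulVec (C.mulVec (ε t)))) t) →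
      Filter.Tendsto ε (nhdsWithin T₀ (Set.Iio T₀)) (nhds 0) := by
  
  intro T₀ ξ ε hε
  have hν0 : ν ≠ 0 := ne_of_lt hν
  have hc : 0 < -ν * ρ := by nlinarith
  have hbase : 0 < ξ₀ ^ (-ν) := Real.rpow_pos_of_pos hξ₀ _
  have hT₀eq : T₀ = ξ₀ ^ (-ν) / (-ν * ρ) := rfl
  have hT₀ : 0 < T₀ := div_pos hbase hc
  rcases Nat.eq_zero_or_pos n with hn0 | hn1
  · subst hn0
    have hz : ε = fun _ => 0 := funext fun t => funext fun i => i.elim0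
    rw [hz]; exact tendsto_const_nhds
  -- scalar setup
  set p : ℝ := -(1/ν) with hp_def
  have hp : 0 < p := by
    have h1 : 1/ν < 0 := div_neg_of_pos_of_neg one_pos hν
    rw [hp_def]; linarith
  set b : ℝ → ℝ := fun t => ξ₀ ^ (-ν) + ν * ρ * t with hb_def
  have hbpos : ∀ {t : ℝ}, t < T₀ → 0 < b t := by
    intro t ht
    have h1 : t * (-ν * ρ) < ξ₀ ^ (-ν) := (lt_div_iff₀ hc).mp ht
    simp only [hb_def]; nlinarith
  have hξ_eq : ∀ t, ξ t = b t ^ p := fun t => rfl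
  have hξpos : ∀ {t : ℝ}, t < T₀ → 0 < ξ t := fun ht => Real.rpow_pos_of_pos (hbpos ht) _
  set s : ℝ → ℝ := fun t => Real.log (ξ t) with hs_def
  have hs_app : ∀ t, Real.log (ξ t) = s t := fun _ => rfl
  have hξν : ∀ {t : ℝ}, t < T₀ → ξ t ^ ν = (b t)⁻¹ := by
    intro t ht
    rw [hξ_eq, ← Real.rpow_mul (le_of_lt (hbpos ht))]
    have : p * ν = -1 := by rw [hp_def]; field_simp
    rw [this, Real.rpow_neg_one]
  have hξs : ∀ {t : ℝ}, t < T₀ → Real.exp (ν * s t) = ξ t ^ ν := by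
    intro t ht
    rw [Real.rpow_def_of_pos (hξpos ht), mul_comm]
  have hξs1 : ∀ {t : ℝ}, t < T₀ → Real.exp (s t) = ξ t := by
    intro t ht; exact Real.exp_log (hξpos ht)
  have hs' : ∀ {t : ℝ}, t < T₀ → HasDerivAt s (-ρ / b t) t := by
    intro t ht
    have hbt := hbpos ht
    have hb' : HasDerivAt b (ν * ρ) t := by
      have h := ((hasDerivAt_id t).const_mul (ν * ρ)).const_add (ξ₀ ^ (-ν))
      rw [mul_one] at h; exact h
    have hlog0 : HasDerivAt (fun t => Real.log (b t)) ((b t)⁻¹ * (ν * ρ)) t := by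
      exact (Real.hasDerivAt_log (ne_of_gt hbt)).comp t hb'
    have hlog : HasDerivAt (fun t => p * Real.log (b t)) (p * ((b t)⁻¹ * (ν * ρ))) t :=
      hlog0.const_mul p
    have heq : s =ᶠ[nhds t] fun t => p * Real.log (b t) := by
      filter_upwards [Iio_mem_nhds ht] with x hx
      rw [hs_def]
      exact Real.log_rpow (hbpos hx) p
    have h2 : HasDerivAt s (p * ((b t)⁻¹ * (ν * ρ))) t := hlog.congr_of_eventuallyEq heq
    convert h2 using 1
    rw [hp_def]
    field_simp
  -- matrices
  set M : Matrix (Fin n) (Fin n) ℝ := A₀ + L * C + ρ • G with hM_def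
  set Q : Matrix (Fin n) (Fin n) ℝ :=
    P * (A₀ + L * C) + (A₀ + L * C)ᵀ * P + ρ • (P * G + Gᵀ * P) with hQ_def
  have hMQ : Mᵀ * P + P * M = Q := by
    rw [hM_def, hQ_def]
    rw [Matrix.transpose_add, Matrix.transpose_smul, Matrix.add_mul, Matrix.smul_mul,
      Matrix.mul_add, Matrix.mul_smul, smul_add]
    abel
  set E : ℝ → Matrix (Fin n) (Fin n) ℝ := fun t => exp ((-(s t)) • G) with hE_def
  set w : ℝ → (Fin n → ℝ) := fun t => (E t).mulVec (ε t) with hw_def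
  have hEexp : ∀ t, exp (s t • G) * E t = 1 := by
    intro t
    have h1 := exp_neg_mul G (-(s t))
    rwa [neg_neg] at h1
  have hEexp' : ∀ t, E t * exp (s t • G) = 1 := fun t => exp_neg_mul G (s t)
  have hεw : ∀ t, ε t = (exp (s t • G)).mulVec (w t) := by
    intro t
    rw [hw_def]
    simp only
    rw [Matrix.mulVec_mulVec, hEexp, Matrix.one_mulVec]
  have hwε : ∀ t, w t = (E t).mulVec (ε t) := fun t => rfl
  -- derivative of w
  have hw : ∀ t ∈ Set.Ico (0:ℝ) T₀, HasDerivAt w ((ξ t ^ ν) • M.mulVec (w t)) t := by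
    intro t ht
    obtain ⟨ht0, htT⟩ := ht
    have hbt := hbpos htT
    have hξt := hξpos htT
    have hst : HasDerivAt s (-ρ / b t) t := hs' htT
    have hu : HasDerivAt (fun t => -(s t)) (ρ / b t) t := by
      have h := hst.neg; rw [neg_div, neg_neg] at h; exact h
    have hEij : ∀ i j, HasDerivAt (fun t => E t i j) (((ρ / b t) • (G * E t)) i j) t := by
      intro i j
      have hcomp := (hasDerivAt_exp_entry' G (-(s t)) i j).comp t hu
      simp only [Function.comp_def] at hcomp
      simp only [hE_def, Matrix.smul_apply, smul_eq_mul]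
      exact hcomp.congr_deriv (mul_comm _ _)
    have hεd := hε t ⟨ht0, htT⟩
    simp only [hs_app] at hεd
    have hwd := hasDerivAt_matfun_mulVec hEij hεd
    have key : ((ρ / b t) • (G * E t)).mulVec (ε t) + (E t).mulVec
        (A₀.mulVec (ε t) + (ξ t) ^ (ν - 1) •
          (exp (s t • G)).mulVec (L.mulVec (C.mulVec (ε t))))
        = (ξ t ^ ν) • M.mulVec (w t) := by
      have h1 : ((ρ / b t) • (G * E t)).mulVec (ε t) = (ρ * ξ t ^ ν) • G.mulVec (w t) := by
        rw [Matrix.smul_mulVec, ← Matrix.mulVec_mulVec, hξν htT, div_eq_mul_inv]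
      have h2 : (E t).mulVec (A₀.mulVec (ε t)) = (ξ t ^ ν) • (A₀.mulVec (w t)) := by
        rw [Matrix.mulVec_mulVec, hE_def]
        simp only
        rw [exp_smul_mul_A₀ A₀ G hA₀ (-(s t))]
        rw [show -(ν * -(s t)) = ν * s t by ring, hξs htT]
        rw [Matrix.smul_mulVec, ← Matrix.mulVec_mulVec]
      have hCε : C.mulVec (ε t) = ξ t • (C.mulVec (w t)) := by
        rw [hεw t, Matrix.mulVec_mulVec (w t) C (exp (s t • G)), C_mul_exp C G hC (s t),
          hξs1 htT, Matrix.smul_mulVec]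
      have h3 : (E t).mulVec ((ξ t) ^ (ν - 1) •
          (exp (s t • G)).mulVec (L.mulVec (C.mulVec (ε t))))
          = (ξ t ^ ν) • L.mulVec (C.mulVec (w t)) := by
        rw [Matrix.mulVec_smul, Matrix.mulVec_mulVec (L.mulVec (C.mulVec (ε t))) (E t)
          (exp (s t • G)), hEexp', Matrix.one_mulVec, hCε, Matrix.mulVec_smul, smul_smul]
        rw [show ξ t ^ (ν - 1) * ξ t = ξ t ^ ν by
          rw [← Real.rpow_add_one (ne_of_gt hξt) (ν - 1), sub_add_cancel]]
      rw [Matrix.mulVec_add, h1, h2, h3, hM_def]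
      rw [Matrix.add_mulVec, Matrix.add_mulVec, Matrix.smul_mulVec,
        ← Matrix.mulVec_mulVec]
      module
    rw [key] at hwd
    exact hwd
  -- Lyapunov function
  set V : ℝ → ℝ := fun t => w t ⬝ᵥ P.mulVec (w t) with hV_def
  have hV : ∀ t ∈ Set.Ico (0:ℝ) T₀,
      HasDerivAt V (ξ t ^ ν * (w t ⬝ᵥ Q.mulVec (w t))) t := by
    intro t ht
    have hwt := hw t ht
    have hPw : HasDerivAt (fun t => P.mulVec (w t)) (P.mulVec ((ξ t ^ ν) • M.mulVec (w t))) t := by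
      have h0 : ∀ i j, HasDerivAt (fun _ : ℝ => P i j) ((0 : Matrix (Fin n) (Fin n) ℝ) i j) t :=
        fun i j => by simpa using hasDerivAt_const t (P i j)
      have := hasDerivAt_matfun_mulVec h0 hwt
      simpa [Matrix.zero_mulVec] using this
    have hVd := hasDerivAt_dotProduct hwt hPw
    have key : ((ξ t ^ ν) • M.mulVec (w t)) ⬝ᵥ P.mulVec (w t)
        + w t ⬝ᵥ P.mulVec ((ξ t ^ ν) • M.mulVec (w t))
        = ξ t ^ ν * (w t ⬝ᵥ Q.mulVec (w t)) := by
      have e1 : (M.mulVec (w t)) ⬝ᵥ (P.mulVec (w t)) = w t ⬝ᵥ ((Mᵀ * P).mulVec (w t)) := by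
        rw [dot_mulVec_swap, Matrix.mulVec_mulVec (w t) Mᵀ P]
      have e2 : w t ⬝ᵥ (P.mulVec (M.mulVec (w t))) = w t ⬝ᵥ ((P * M).mulVec (w t)) := by
        rw [Matrix.mulVec_mulVec (w t) P M]
      rw [smul_dotProduct, Matrix.mulVec_smul, dotProduct_smul, e1, e2]
      rw [smul_eq_mul, smul_eq_mul, ← mul_add, ← dotProduct_add, ← Matrix.add_mulVec, hMQ]
    rw [key] at hVd
    exact hVd
  have hVanti : AntitoneOn V (Set.Ico 0 T₀) := by
    apply antitoneOn_of_deriv_nonpos (convex_Ico 0 T₀)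
    · intro t ht
      exact (hV t ht).continuousAt.continuousWithinAt
    · rw [interior_Ico]
      intro t ht
      exact ((hV t (Set.Ioo_subset_Ico_self ht)).differentiableAt).differentiableWithinAt
    · rw [interior_Ico]
      intro t ht
      rw [(hV t (Set.Ioo_subset_Ico_self ht)).deriv]
      have h1 : 0 < ξ t ^ ν := Real.rpow_pos_of_pos (hξpos ht.2) ν
      exact mul_nonpos_of_nonneg_of_nonpos (le_of_lt h1) (hLMI (w t))
  -- quadratic form constants
  haveI : Nonempty (Fin n) := ⟨⟨0, hn1⟩⟩
  have hsph : (Metric.sphere (0 : Fin n → ℝ) 1).Nonempty := NormedSpace.sphere_nonempty.mpr zero_le_one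
  have hcpt : IsCompact (Metric.sphere (0 : Fin n → ℝ) 1) := isCompact_sphere _ _
  obtain ⟨x₁, hx₁s, hx₁min0⟩ := hcpt.exists_isMinOn hsph (continuous_quadForm P).continuousOn
  have hx₁min : ∀ y ∈ Metric.sphere (0 : Fin n → ℝ) 1,
      x₁ ⬝ᵥ P.mulVec x₁ ≤ y ⬝ᵥ P.mulVec y := fun y hy => isMinOn_iff.mp hx₁min0 y hy
  have hsphne : ∀ x : Fin n → ℝ, x ∈ Metric.sphere (0 : Fin n → ℝ) 1 → x ≠ 0 := by
    intro x hx h0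
    rw [h0, mem_sphere_iff_norm] at hx
    simp at hx
  have hc₁ : 0 < x₁ ⬝ᵥ P.mulVec x₁ := hPpd x₁ (hsphne x₁ hx₁s)
  set c₁ : ℝ := x₁ ⬝ᵥ P.mulVec x₁ with hc₁_def
  obtain ⟨x₂, hx₂s, hx₂max0⟩ := hcpt.exists_isMaxOn hsph (continuous_quadForm P).continuousOn
  have hx₂max : ∀ y ∈ Metric.sphere (0 : Fin n → ℝ) 1,
      y ⬝ᵥ P.mulVec y ≤ x₂ ⬝ᵥ P.mulVec x₂ := fun y hy => isMaxOn_iff.mp hx₂max0 y hy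
  set c₂ : ℝ := x₂ ⬝ᵥ P.mulVec x₂ with hc₂_def
  have hc₂ : 0 < c₂ := lt_of_lt_of_le hc₁ (hx₁min x₂ hx₂s)
  obtain ⟨x₃, hx₃s, hx₃min0⟩ :=
    hcpt.exists_isMinOn hsph (continuous_quadForm (P * G + Gᵀ * P)).continuousOn
  have hx₃min : ∀ y ∈ Metric.sphere (0 : Fin n → ℝ) 1,
      x₃ ⬝ᵥ (P * G + Gᵀ * P).mulVec x₃ ≤ y ⬝ᵥ (P * G + Gᵀ * P).mulVec y :=
    fun y hy => isMinOn_iff.mp hx₃min0 y hy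
  set m : ℝ := x₃ ⬝ᵥ (P * G + Gᵀ * P).mulVec x₃ with hm_def
  have hm : 0 < m := hGpd x₃ (hsphne x₃ hx₃s)
  set α : ℝ := m / (2 * c₂) with hα_def
  have hα : 0 < α := div_pos hm (by linarith)
  have hsphere_mem : ∀ x : Fin n → ℝ, x ≠ 0 → (‖x‖⁻¹ • x) ∈ Metric.sphere (0 : Fin n → ℝ) 1 := by
    intro x hx
    have hxn : 0 < ‖x‖ := norm_pos_iff.mpr hx
    rw [mem_sphere_iff_norm, sub_zero, norm_smul, norm_inv, norm_norm]
    field_simp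
  have hlow : ∀ x : Fin n → ℝ, c₁ * ‖x‖ ^ 2 ≤ x ⬝ᵥ P.mulVec x := by
    intro x
    rcases eq_or_ne x 0 with rfl | hx
    · simp
    · have hxn : 0 < ‖x‖ := norm_pos_iff.mpr hx
      have h1 := hx₁min _ (hsphere_mem x hx)
      rw [quadForm_smul] at h1
      have h3 : ‖x‖⁻¹ ^ 2 * ‖x‖ ^ 2 = 1 := by field_simp
      nlinarith [mul_le_mul_of_nonneg_right h1 (sq_nonneg ‖x‖), hPpd x hx]
  have hαP : ∀ x : Fin n → ℝ, 2 * α * (x ⬝ᵥ P.mulVec x) ≤ x ⬝ᵥ (P * G + Gᵀ * P).mulVec x := by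
    intro x
    rcases eq_or_ne x 0 with rfl | hx
    · simp
    · have hxn : 0 < ‖x‖ := norm_pos_iff.mpr hx
      have hy := hsphere_mem x hx
      have h1 : m ≤ (‖x‖⁻¹ • x) ⬝ᵥ (P * G + Gᵀ * P).mulVec (‖x‖⁻¹ • x) := hx₃min _ hy
      have h2 : (‖x‖⁻¹ • x) ⬝ᵥ P.mulVec (‖x‖⁻¹ • x) ≤ c₂ := hx₂max _ hy
      rw [quadForm_smul] at h1 h2
      have h5 : 2 * α * c₂ = m := by
        rw [hα_def]; field_simp
      have h3' : ‖x‖⁻¹ ^ 2 * ‖x‖ ^ 2 = 1 := by field_simp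
      have key2 : (2 * α) * (‖x‖⁻¹ ^ 2 * (x ⬝ᵥ P.mulVec x))
          ≤ ‖x‖⁻¹ ^ 2 * (x ⬝ᵥ (P * G + Gᵀ * P).mulVec x) := by
        nlinarith [mul_le_mul_of_nonneg_left h2 (show (0:ℝ) ≤ 2 * α by positivity)]
      nlinarith [key2, h3', sq_nonneg ‖x‖, mul_le_mul_of_nonneg_right key2 (sq_nonneg ‖x‖)]
  -- exponential decay estimate
  have hdecay : ∀ (v : Fin n → ℝ) (u : ℝ), u ≤ 0 →
      ((exp (u • G)).mulVec v) ⬝ᵥ P.mulVec ((exp (u • G)).mulVec v)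
        ≤ Real.exp (2 * α * u) * (v ⬝ᵥ P.mulVec v) := by
    intro v u hu
    set y : ℝ → Fin n → ℝ := fun u => (exp (u • G)).mulVec v with hy_def
    have hyd : ∀ u, HasDerivAt y (G.mulVec (y u)) u := by
      intro u
      have hEij : ∀ i j, HasDerivAt (fun u : ℝ => exp (u • G) i j)
          ((G * exp (u • G)) i j) u := fun i j => hasDerivAt_exp_entry' G u i j
      have hconst : HasDerivAt (fun _ : ℝ => v) (0 : Fin n → ℝ) u := hasDerivAt_const u v
      have := hasDerivAt_matfun_mulVec hEij hconst
      simpa [Matrix.mulVec_zero, ← Matrix.mulVec_mulVec] using this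
    set φ : ℝ → ℝ := fun u => y u ⬝ᵥ P.mulVec (y u) with hφ_def
    have hφd : ∀ u, HasDerivAt φ (y u ⬝ᵥ (Gᵀ * P + P * G).mulVec (y u)) u := by
      intro u
      have hPy : HasDerivAt (fun u => P.mulVec (y u)) (P.mulVec (G.mulVec (y u))) u := by
        have h0 : ∀ i j, HasDerivAt (fun _ : ℝ => P i j) ((0 : Matrix (Fin n) (Fin n) ℝ) i j) u :=
          fun i j => by simpa using hasDerivAt_const u (P i j)
        have := hasDerivAt_matfun_mulVec h0 (hyd u)
        simpa [Matrix.zero_mulVec] using this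
      have hd := hasDerivAt_dotProduct (hyd u) hPy
      have key : G.mulVec (y u) ⬝ᵥ P.mulVec (y u) + y u ⬝ᵥ P.mulVec (G.mulVec (y u))
          = y u ⬝ᵥ (Gᵀ * P + P * G).mulVec (y u) := by
        rw [dot_mulVec_swap, Matrix.mulVec_mulVec (y u) Gᵀ P, Matrix.mulVec_mulVec (y u) P G,
          ← dotProduct_add, ← Matrix.add_mulVec]
      rw [key] at hd
      exact hd
    set ψ : ℝ → ℝ := fun u => Real.exp (-(2 * α * u)) * φ u with hψ_def
    have hψd : ∀ u, HasDerivAt ψ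
        (Real.exp (-(2 * α * u)) * (y u ⬝ᵥ (Gᵀ * P + P * G).mulVec (y u) - 2 * α * φ u)) u := by
      intro u
      have he : HasDerivAt (fun u : ℝ => Real.exp (-(2 * α * u)))
          (Real.exp (-(2 * α * u)) * (-(2 * α))) u := by
        have h1 : HasDerivAt (fun u : ℝ => -(2 * α * u)) (-(2 * α)) u := by
          have h := ((hasDerivAt_id u).const_mul (2 * α)).neg; rw [mul_one] at h; exact h
        exact (Real.hasDerivAt_exp _).comp u h1
      have := he.mul (hφd u)
      exact this.congr_deriv (by ring)
    have hψmono : MonotoneOn ψ (Set.univ : Set ℝ) := by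
      apply monotoneOn_of_deriv_nonneg convex_univ
      · exact (fun u _ => (hψd u).continuousAt.continuousWithinAt)
      · intro u _
        exact (hψd u).differentiableAt.differentiableWithinAt
      · intro u _
        rw [(hψd u).deriv]
        apply mul_nonneg (le_of_lt (Real.exp_pos _))
        have h1 := hαP (y u)
        have h2 : y u ⬝ᵥ (Gᵀ * P + P * G).mulVec (y u)
            = y u ⬝ᵥ (P * G + Gᵀ * P).mulVec (y u) := by rw [add_comm (Gᵀ * P)]
        rw [h2, hφ_def]
        simp only
        linarith
    have hmono := hψmono (Set.mem_univ u) (Set.mem_univ 0) hu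
    have hψ0 : ψ 0 = v ⬝ᵥ P.mulVec v := by
      rw [hψ_def]
      simp only
      rw [hφ_def]
      simp only
      rw [hy_def]
      simp only [zero_smul, exp_zero, Matrix.one_mulVec]
      simp
    rw [hψ0] at hmono
    -- hmono : ψ u ≤ v ⬝ᵥ P.mulVec v
    have hexp : (0:ℝ) < Real.exp (2 * α * u) := Real.exp_pos _
    have h6 := mul_le_mul_of_nonneg_left hmono (le_of_lt hexp)
    rw [hψ_def] at h6
    simp only at h6
    rw [← mul_assoc, ← Real.exp_add] at h6
    simp only [add_neg_cancel, Real.exp_zero, one_mul] at h6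
    exact h6
  -- limits
  have hbT : Tendsto b (nhdsWithin T₀ (Set.Iio T₀)) (nhdsWithin 0 (Set.Ioi 0)) := by
    rw [tendsto_nhdsWithin_iff]
    constructor
    · have hcont : Continuous b := by
        rw [hb_def]
        exact continuous_const.add (continuous_const.mul continuous_id)
      have hbT0 : b T₀ = 0 := by
        rw [hb_def, hT₀eq]
        field_simp
        ring
      have := hcont.continuousAt (x := T₀)
      rw [ContinuousAt, hbT0] at this
      exact this.mono_left nhdsWithin_le_nhds
    · filter_upwards [self_mem_nhdsWithin] with t ht
      exact hbpos ht
  have hξT : Tendsto (fun t => ξ t) (nhdsWithin T₀ (Set.Iio T₀)) (nhdsWithin 0 (Set.Ioi 0)) := by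
    rw [tendsto_nhdsWithin_iff]
    constructor
    · have h1 : Tendsto (fun x : ℝ => x ^ p) (nhdsWithin 0 (Set.Ioi 0)) (nhds 0) := by
        have hcp := (Real.continuousAt_rpow_const 0 p (Or.inr (le_of_lt hp))).tendsto
        rw [Real.zero_rpow (ne_of_gt hp)] at hcp
        exact hcp.mono_left nhdsWithin_le_nhds
      exact h1.comp hbT
    · filter_upwards [self_mem_nhdsWithin] with t ht
      exact hξpos ht
  have hsT : Tendsto s (nhdsWithin T₀ (Set.Iio T₀)) Filter.atBot := by
    have := Real.tendsto_log_nhdsGT_zero.comp hξT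
    exact this
  -- final squeeze
  have hgT : Tendsto (fun t => Real.sqrt (Real.exp (2 * α * s t) * (V 0 / c₁)))
      (nhdsWithin T₀ (Set.Iio T₀)) (nhds 0) := by
    have h2 : Tendsto (fun t => 2 * α * s t) (nhdsWithin T₀ (Set.Iio T₀)) Filter.atBot := by
      apply Filter.Tendsto.const_mul_atBot (by positivity) hsT
    have h3 := Real.tendsto_exp_atBot.comp h2
    have h4 := h3.mul_const (V 0 / c₁)
    rw [zero_mul] at h4
    have h5 := (Real.continuous_sqrt.tendsto 0).comp h4
    rw [Real.sqrt_zero] at h5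
    exact h5
  apply squeeze_zero_norm' _ hgT
  have hev1 : ∀ᶠ t in nhdsWithin T₀ (Set.Iio T₀), t ∈ Set.Ico 0 T₀ := by
    have h1 : Set.Ioo (0:ℝ) T₀ ∈ nhdsWithin T₀ (Set.Iio T₀) :=
      Ioo_mem_nhdsLT_of_mem ⟨hT₀, le_refl T₀⟩
    filter_upwards [h1] with t ht
    exact Set.Ioo_subset_Ico_self ht
  have hev2 : ∀ᶠ t in nhdsWithin T₀ (Set.Iio T₀), s t ≤ 0 :=
    hsT.eventually (Filter.eventually_le_atBot 0)
  filter_upwards [hev1, hev2] with t ht hts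
  have htT := ht.2
  have h1 : c₁ * ‖ε t‖ ^ 2 ≤ ε t ⬝ᵥ P.mulVec (ε t) := hlow (ε t)
  have h2 : ε t ⬝ᵥ P.mulVec (ε t) ≤ Real.exp (2 * α * s t) * (w t ⬝ᵥ P.mulVec (w t)) := by
    have := hdecay (w t) (s t) hts
    rw [← hεw t] at this
    exact this
  have h3 : w t ⬝ᵥ P.mulVec (w t) ≤ V 0 := by
    have := hVanti (Set.mem_Ico.mpr ⟨le_refl 0, hT₀⟩) ht ht.1
    exact this
  have h4 : ‖ε t‖ ^ 2 ≤ Real.exp (2 * α * s t) * (V 0 / c₁) := by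
    have hterm : Real.exp (2 * α * s t) * (w t ⬝ᵥ P.mulVec (w t))
        ≤ Real.exp (2 * α * s t) * V 0 :=
      mul_le_mul_of_nonneg_left h3 (le_of_lt (Real.exp_pos _))
    rw [mul_div_assoc']
    rw [le_div_iff₀ hc₁]
    nlinarith
  have h5 := Real.sqrt_le_sqrt h4
  rwa [Real.sqrt_sq (norm_nonneg _)] at h5
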